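/- Let $\mathcal{D}$ be a bounded sequence of integers $(d_k)_{k\ge 1}$ with every $d_k \ge 2$, let $(i,j)$ satisfy $0 < i,j < 1$ and $i+j=1$, let $R > 1$ be a real number, let $t \in \mathbb{N}$ with $t \ge 1$, and let $\rho_1$ and $c$ be positive reals satisfying $\rho_1 < \big(\tfrac{1}{4} R^{-2t/(1+j)}\big)^j$ and $c < \rho_1^{1/j}$. Then for every integer $k \ge 1$ and every closed interval $B \subset \mathbb{R}$ of radius (half-length) $\rho_1 R^{-t(k-1)}$, there is at most one point $P \in \mathcal{C}_{c,k}$ such that $\Delta_c(P) \cap B \neq \emptyset$. -/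

import Mathlib

/-- `Dprod d n = d 0 * d 1 * ... * d (n-1)`, i.e. the product of the first `n`
terms of the sequence `d` (so `Dprod d 0 = 1`). -/
def Dprod (d : ℕ → ℕ) (n : ℕ) : ℕ := ∏ k ∈ Finset.range n, d k

/-- The `𝒟`-adic pseudo absolute value `|q|_𝒟 = inf {1 / D_n : q ∈ D_n ℤ}`. -/
noncomputable def pseudoAbs (d : ℕ → ℕ) (q : ℕ) : ℝ :=
  sInf {x : ℝ | ∃ n : ℕ, Dprod d n ∣ q ∧ x = 1 / (Dprod d n : ℝ)}

/-- Distance from a real number to its nearest integer. -/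
noncomputable def distNearestInt (x : ℝ) : ℝ := |x - round x|

/-- The set of mixed `(i,j)`-badly approximable numbers `Bad_𝒟(i,j)`. -/
def BadD (d : ℕ → ℕ) (i j : ℝ) : Set ℝ :=
  {x : ℝ | ∃ c : ℝ, 0 < c ∧ ∀ q : ℕ, 0 < q →
    max (pseudoAbs d q ^ (1 / i)) (distNearestInt ((q : ℝ) * x) ^ (1 / j)) > c / (q : ℝ)}

/-- The interval `Δ_c(r/q) = {x : |x - r/q| ≤ c^j / q^{1+j}}`. -/
def Delta (c j : ℝ) (r : ℤ) (q : ℕ) : Set ℝ :=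
  {x : ℝ | |x - (r : ℝ) / (q : ℝ)| ≤ c ^ j / (q : ℝ) ^ (1 + j)}

/-! Two distinct points `r₁/q₁`, `r₂/q₂` of `𝒞_c` are well separated: `|q|_𝒟 ≤ (c/q)^i`
provides some `D_n ∣ q` with `q^i ≤ c^i D_n`, the smaller of the two `D_n` divides both
denominators, hence `|r₁/q₁ - r₂/q₂| ≥ D_n/(q₁q₂) ≥ 1/(c^i max(q₁,q₂)^(1+j))`, which in
`𝒞_{c,k}` is at least `R^(-tk)/c^i`. On the other hand both `Δ_c(P)` have radius at most
`ρ₁R^(-t(k-1))`, so two of them meeting `B` have centres within `4ρ₁R^(-t(k-1))`.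
The conditions on `ρ₁` and `c` force `4ρ₁c^iR^t < 1`, so the two bounds clash. -/

lemma Dprod_dvd_Dprod (d : ℕ → ℕ) {m n : ℕ} (h : m ≤ n) : Dprod d m ∣ Dprod d n :=
  Finset.prod_dvd_prod_of_subset _ _ _ (Finset.range_subset_range.mpr h)

lemma exists_Dprod_dvd_pseudoAbs_eq (d : ℕ → ℕ) {q : ℕ} (hq : 0 < q) :
    ∃ n, Dprod d n ∣ q ∧ pseudoAbs d q = 1 / (Dprod d n : ℝ) := by
  set S := {x : ℝ | ∃ n : ℕ, Dprod d n ∣ q ∧ x = 1 / (Dprod d n : ℝ)}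
  have hne : S.Nonempty := ⟨1, 0, by simp [Dprod]⟩
  -- only divisors of `q` occur, so the infimum is a minimum
  have hfin : S.Finite := by
    refine (q.divisors.finite_toSet.image fun m : ℕ => 1 / (m : ℝ)).subset ?_
    rintro x ⟨n, hdvd, rfl⟩
    exact ⟨_, Nat.mem_divisors.mpr ⟨hdvd, hq.ne'⟩, rfl⟩
  exact hne.csInf_mem hfin

lemma exists_Dprod_dvd_rpow_le {d : ℕ → ℕ} {i c : ℝ} {q : ℕ} (hc : 0 ≤ c) (hq : 0 < q)
    (hC : pseudoAbs d q ≤ (c / q) ^ i) :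
    ∃ n, Dprod d n ∣ q ∧ (q : ℝ) ^ i ≤ c ^ i * Dprod d n := by
  obtain ⟨n, hdvd, heq⟩ := exists_Dprod_dvd_pseudoAbs_eq d hq
  have hD : (0 : ℝ) < Dprod d n := by exact_mod_cast Nat.pos_of_dvd_of_pos hdvd hq
  have hq' : (0 : ℝ) < q := by exact_mod_cast hq
  rw [heq, Real.div_rpow hc hq'.le, div_le_div_iff₀ hD (by positivity), one_mul] at hC
  exact ⟨n, hdvd, hC⟩

lemma exists_dvd_dvd_min_rpow_le {d : ℕ → ℕ} {i c : ℝ} {q₁ q₂ : ℕ} (hi : 0 ≤ i) (hc : 0 ≤ c)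
    (hq₁ : 0 < q₁) (hq₂ : 0 < q₂)
    (hC₁ : pseudoAbs d q₁ ≤ (c / q₁) ^ i) (hC₂ : pseudoAbs d q₂ ≤ (c / q₂) ^ i) :
    ∃ D : ℕ, D ∣ q₁ ∧ D ∣ q₂ ∧ (min (q₁ : ℝ) q₂) ^ i ≤ c ^ i * D := by
  obtain ⟨n₁, hdvd₁, hle₁⟩ := exists_Dprod_dvd_rpow_le hc hq₁ hC₁
  obtain ⟨n₂, hdvd₂, hle₂⟩ := exists_Dprod_dvd_rpow_le hc hq₂ hC₂
  rcases le_total n₁ n₂ with h | h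
  · refine ⟨_, hdvd₁, (Dprod_dvd_Dprod d h).trans hdvd₂, le_trans ?_ hle₁⟩
    exact Real.rpow_le_rpow (by positivity) (min_le_left _ _) hi
  · refine ⟨_, (Dprod_dvd_Dprod d h).trans hdvd₁, hdvd₂, le_trans ?_ hle₂⟩
    exact Real.rpow_le_rpow (by positivity) (min_le_right _ _) hi

lemma div_mul_le_abs_div_sub_div {D q₁ q₂ : ℕ} {r₁ r₂ : ℤ} (hD₁ : D ∣ q₁) (hD₂ : D ∣ q₂)
    (hq₁ : 0 < q₁) (hq₂ : 0 < q₂) (hne : (r₁ : ℝ) / q₁ ≠ (r₂ : ℝ) / q₂) :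
    (D : ℝ) / (q₁ * q₂) ≤ |(r₁ : ℝ) / q₁ - (r₂ : ℝ) / q₂| := by
  have hq₁' : (q₁ : ℝ) ≠ 0 := by positivity
  have hq₂' : (q₂ : ℝ) ≠ 0 := by positivity
  have hnum : r₁ * (q₂ : ℤ) - r₂ * q₁ ≠ 0 := by
    intro h
    apply hne
    rw [div_eq_div_iff hq₁' hq₂']
    exact_mod_cast sub_eq_zero.mp h
  have hdvd : (D : ℤ) ∣ r₁ * (q₂ : ℤ) - r₂ * q₁ :=
    dvd_sub (dvd_mul_of_dvd_right (Int.natCast_dvd_natCast.mpr hD₂) _)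
      (dvd_mul_of_dvd_right (Int.natCast_dvd_natCast.mpr hD₁) _)
  have hD : (D : ℝ) ≤ |((r₁ * (q₂ : ℤ) - r₂ * q₁ : ℤ) : ℝ)| := by
    rw [← Int.cast_abs]
    exact_mod_cast Int.le_of_dvd (abs_pos.mpr hnum) ((dvd_abs _ _).mpr hdvd)
  have heq : (r₁ : ℝ) / q₁ - (r₂ : ℝ) / q₂ = ((r₁ * (q₂ : ℤ) - r₂ * q₁ : ℤ) : ℝ) / (q₁ * q₂) := by
    field_simp
    push_cast
    ring
  rw [heq, abs_div, abs_of_pos (by positivity : (0 : ℝ) < q₁ * q₂)]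
  gcongr

lemma mul_le_min_rpow_mul_max_rpow {x y i j : ℝ} (hx : 0 < x) (hy : 0 < y) (hj : 0 ≤ j)
    (hij : i + j = 1) : x * y ≤ min x y ^ i * max x y ^ (1 + j) := by
  have hmin : 0 < min x y := lt_min hx hy
  have hmax : 0 < max x y := hmin.trans_le min_le_max
  calc x * y = min x y ^ i * min x y ^ j * max x y := by
        rw [← Real.rpow_add hmin, hij, Real.rpow_one, min_mul_max]
    _ ≤ min x y ^ i * max x y ^ j * max x y := by
        gcongr
        exact min_le_max
    _ = min x y ^ i * max x y ^ (1 + j) := by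
        rw [Real.rpow_add hmax, Real.rpow_one]
        ring

lemma one_le_mul_mul_abs_div_sub_div {d : ℕ → ℕ} {i j c N : ℝ} {r₁ r₂ : ℤ} {q₁ q₂ : ℕ}
    (hi : 0 ≤ i) (hj : 0 ≤ j) (hij : i + j = 1) (hc : 0 ≤ c) (hq₁ : 0 < q₁) (hq₂ : 0 < q₂)
    (hC₁ : pseudoAbs d q₁ ≤ (c / q₁) ^ i) (hC₂ : pseudoAbs d q₂ ≤ (c / q₂) ^ i)
    (hN₁ : (q₁ : ℝ) ^ (1 + j) ≤ N) (hN₂ : (q₂ : ℝ) ^ (1 + j) ≤ N)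
    (hne : (r₁ : ℝ) / q₁ ≠ (r₂ : ℝ) / q₂) :
    1 ≤ c ^ i * N * |(r₁ : ℝ) / q₁ - (r₂ : ℝ) / q₂| := by
  obtain ⟨D, hD₁, hD₂, hD⟩ := exists_dvd_dvd_min_rpow_le hi hc hq₁ hq₂ hC₁ hC₂
  have hq₁' : (0 : ℝ) < q₁ := by exact_mod_cast hq₁
  have hq₂' : (0 : ℝ) < q₂ := by exact_mod_cast hq₂
  have hmax : max (q₁ : ℝ) q₂ ^ (1 + j) ≤ N := by
    rcases max_choice (q₁ : ℝ) q₂ with h | h <;> rw [h] <;> assumption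
  have hgap := div_mul_le_abs_div_sub_div hD₁ hD₂ hq₁ hq₂ hne
  rw [div_le_iff₀ (by positivity)] at hgap
  have hN : 0 ≤ N := (by positivity : (0 : ℝ) ≤ (q₁ : ℝ) ^ (1 + j)).trans hN₁
  refine le_of_mul_le_mul_right ?_ (by positivity : (0 : ℝ) < q₁ * q₂)
  calc 1 * ((q₁ : ℝ) * q₂) ≤ min (q₁ : ℝ) q₂ ^ i * max (q₁ : ℝ) q₂ ^ (1 + j) := by
        rw [one_mul]
        exact mul_le_min_rpow_mul_max_rpow hq₁' hq₂' hj hij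
    _ ≤ c ^ i * N * D := by
        rw [mul_right_comm]
        gcongr
    _ ≤ c ^ i * N * (|(r₁ : ℝ) / q₁ - (r₂ : ℝ) / q₂| * (q₁ * q₂)) := by gcongr
    _ = c ^ i * N * |(r₁ : ℝ) / q₁ - (r₂ : ℝ) / q₂| * (q₁ * q₂) := by ring

lemma pow_le_rpow_of_le_rpow_div {a x s : ℝ} {t : ℕ} (ht : t ≠ 0) (ha : 0 ≤ a) (hx : 0 ≤ x)
    (h : a ≤ x ^ (s / t)) : a ^ t ≤ x ^ s := by
  calc a ^ t ≤ (x ^ (s / t)) ^ t := by gcongr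
    _ = x ^ s := by rw [← Real.rpow_mul_natCast hx, div_mul_cancel₀ _ (Nat.cast_ne_zero.mpr ht)]

lemma rpow_le_pow_of_rpow_div_le {a x s : ℝ} {t : ℕ} (ht : t ≠ 0) (hx : 0 ≤ x)
    (h : x ^ (s / t) ≤ a) : x ^ s ≤ a ^ t := by
  calc x ^ s = (x ^ (s / t)) ^ t := by
        rw [← Real.rpow_mul_natCast hx, div_mul_cancel₀ _ (Nat.cast_ne_zero.mpr ht)]
    _ ≤ a ^ t := by gcongr

lemma abs_div_sub_le_of_Delta_inter_Icc_nonempty {c j ρ z : ℝ} {r : ℤ} {q : ℕ}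
    (hmeet : (Delta c j r q ∩ Set.Icc (z - ρ) (z + ρ)).Nonempty)
    (hrad : c ^ j / (q : ℝ) ^ (1 + j) ≤ ρ) : |(r : ℝ) / q - z| ≤ 2 * ρ := by
  obtain ⟨x, hxΔ, hxl, hxr⟩ := hmeet
  have hx := abs_le.mp (le_trans hxΔ hrad)
  rw [abs_le]
  constructor <;> linarith [hx.1, hx.2]

lemma mul_rpow_lt_rpow_one_div {ρ c i j : ℝ} (hρ : 0 < ρ) (hc : 0 ≤ c) (hi : 0 < i)
    (hj : j ≠ 0) (hij : i + j = 1) (hc' : c < ρ ^ (1 / j)) : ρ * c ^ i < ρ ^ (1 / j) := by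
  set a := ρ ^ (1 / j)
  have ha : 0 < a := by positivity
  have hρa : ρ = a ^ j := by rw [← Real.rpow_mul hρ.le, one_div_mul_cancel hj, Real.rpow_one]
  calc ρ * c ^ i < a ^ j * a ^ i := by
        rw [hρa]
        gcongr
    _ = a := by rw [← Real.rpow_add ha, add_comm, hij, Real.rpow_one]

lemma four_mul_mul_rpow_mul_pow_lt_one {ρ c i j R : ℝ} {t : ℕ} (hρ : 0 < ρ) (hc : 0 ≤ c)
    (hi : 0 < i) (hj : 0 < j) (hij : i + j = 1) (hR : 1 ≤ R)
    (hρ' : ρ < (1 / 4 * R ^ (-(2 * (t : ℝ) / (1 + j)))) ^ j) (hc' : c < ρ ^ (1 / j)) :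
    4 * ρ * c ^ i * R ^ t < 1 := by
  have hρj : ρ ^ (1 / j) < 1 / 4 * R ^ (-(2 * (t : ℝ) / (1 + j))) := by
    rw [one_div, Real.rpow_inv_lt_iff_of_pos hρ.le (by positivity) hj]
    exact hρ'
  have hexp : R ^ (-(2 * (t : ℝ) / (1 + j))) * R ^ t ≤ 1 := by
    rw [← Real.rpow_natCast, ← Real.rpow_add (by linarith)]
    refine Real.rpow_le_one_of_one_le_of_nonpos hR ?_
    rw [neg_add_nonpos_iff, le_div_iff₀ (by linarith)]
    nlinarith [(Nat.cast_nonneg t : (0 : ℝ) ≤ t), hi]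
  calc 4 * ρ * c ^ i * R ^ t = 4 * (ρ * c ^ i) * R ^ t := by ring
    _ < 4 * (1 / 4 * R ^ (-(2 * (t : ℝ) / (1 + j)))) * R ^ t := by
        gcongr 4 * ?_ * _
        exact (mul_rpow_lt_rpow_one_div hρ hc hi hj.ne' hij hc').trans hρj
    _ ≤ 1 := by linarith

theorem at_most_one_dangerous_point_general (d : ℕ → ℕ)
    (i j : ℝ) (hi : 0 < i) (hj : 0 < j) (hij : i + j = 1)
    (R : ℝ) (hR : 1 < R) (t : ℕ) (ht : 1 ≤ t) (ρ₁ c : ℝ) (hρ₁ : 0 < ρ₁) (hc : 0 < c)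
    (hρ₁' : ρ₁ < (1 / 4 * R ^ (-(2 * (t : ℝ) / (1 + j)))) ^ j)
    (hc' : c < ρ₁ ^ (1 / j))
    (k : ℕ) (z : ℝ)
    (r₁ r₂ : ℤ) (q₁ q₂ : ℕ) (hq₁ : 0 < q₁) (hq₂ : 0 < q₂)
    (hC₁ : pseudoAbs d q₁ ≤ (c / (q₁ : ℝ)) ^ i) (hC₂ : pseudoAbs d q₂ ≤ (c / (q₂ : ℝ)) ^ i)
    (hlo₁ : R ^ (k - 1) ≤ (q₁ : ℝ) ^ ((1 + j) / (t : ℝ)))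
    (hup₁ : (q₁ : ℝ) ^ ((1 + j) / (t : ℝ)) < R ^ k)
    (hlo₂ : R ^ (k - 1) ≤ (q₂ : ℝ) ^ ((1 + j) / (t : ℝ)))
    (hup₂ : (q₂ : ℝ) ^ ((1 + j) / (t : ℝ)) < R ^ k)
    (hmeet₁ : (Delta c j r₁ q₁ ∩
      Set.Icc (z - ρ₁ / R ^ (t * (k - 1))) (z + ρ₁ / R ^ (t * (k - 1)))).Nonempty)
    (hmeet₂ : (Delta c j r₂ q₂ ∩
      Set.Icc (z - ρ₁ / R ^ (t * (k - 1))) (z + ρ₁ / R ^ (t * (k - 1)))).Nonempty) :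
    (r₁ : ℝ) / (q₁ : ℝ) = (r₂ : ℝ) / (q₂ : ℝ) := by
  by_contra hne
  have hcj : c ^ j < ρ₁ := by
    rw [one_div, Real.lt_rpow_inv_iff_of_pos hc.le hρ₁.le hj] at hc'
    exact hc'
  set ρ := ρ₁ / R ^ (t * (k - 1)) with hρ
  have hrad (q : ℕ) (hlo : R ^ (k - 1) ≤ (q : ℝ) ^ ((1 + j) / t)) :
      c ^ j / (q : ℝ) ^ (1 + j) ≤ ρ := by
    have h := pow_le_rpow_of_le_rpow_div (by omega) (by positivity) (Nat.cast_nonneg q) hlo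
    rw [← pow_mul, mul_comm] at h
    exact div_le_div₀ hρ₁.le hcj.le (by positivity) h
  have hsize (q : ℕ) (hup : (q : ℝ) ^ ((1 + j) / t) < R ^ k) : (q : ℝ) ^ (1 + j) ≤ R ^ (t * k) := by
    have h := rpow_le_pow_of_rpow_div_le (by omega) (Nat.cast_nonneg q) hup.le
    rwa [← pow_mul, mul_comm] at h
  have hsep := one_le_mul_mul_abs_div_sub_div hi.le hj.le hij hc.le hq₁ hq₂ hC₁ hC₂
    (hsize q₁ hup₁) (hsize q₂ hup₂) hne
  have hdist : |(r₁ : ℝ) / q₁ - (r₂ : ℝ) / q₂| ≤ 4 * ρ := by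
    have h₁ := abs_div_sub_le_of_Delta_inter_Icc_nonempty hmeet₁ (hrad q₁ hlo₁)
    have h₂ := abs_div_sub_le_of_Delta_inter_Icc_nonempty hmeet₂ (hrad q₂ hlo₂)
    linarith [abs_sub_le ((r₁ : ℝ) / q₁) z ((r₂ : ℝ) / q₂), abs_sub_comm z ((r₂ : ℝ) / q₂)]
  have hRk : R ^ (t * k) ≤ R ^ (t * (k - 1)) * R ^ t := by
    rw [← pow_add, ← Nat.mul_succ]
    exact pow_le_pow_right₀ hR.le (Nat.mul_le_mul_left _ (by omega))
  refine lt_irrefl (1 : ℝ) ?_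
  calc 1 ≤ c ^ i * R ^ (t * k) * |(r₁ : ℝ) / q₁ - (r₂ : ℝ) / q₂| := hsep
    _ ≤ c ^ i * (R ^ (t * (k - 1)) * R ^ t) * (4 * ρ) := by gcongr
    _ = 4 * ρ₁ * c ^ i * R ^ t := by
        rw [hρ]
        field_simp
    _ < 1 := four_mul_mul_rpow_mul_pow_lt_one hρ₁ hc.le hi hj hij hR.le hρ₁' hc'

/-- Under the stated numerical conditions on `ρ₁` and `c`, for every `k ≥ 1` and every
closed interval `B` of radius `ρ₁ R^{-t(k-1)}`, at most one point `P ∈ 𝒞_{c,k}` has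
`Δ_c(P) ∩ B ≠ ∅`. -/
theorem at_most_one_dangerous_point (d : ℕ → ℕ) (hd2 : ∀ k, 2 ≤ d k)
    (hdbdd : ∃ M, ∀ k, d k ≤ M)
    (i j : ℝ) (hi : 0 < i) (hi' : i < 1) (hj : 0 < j) (hj' : j < 1) (hij : i + j = 1)
    (R : ℝ) (hR : 1 < R) (t : ℕ) (ht : 1 ≤ t) (ρ₁ c : ℝ) (hρ₁ : 0 < ρ₁) (hc : 0 < c)
    (hρ₁' : ρ₁ < (1 / 4 * R ^ (-(2 * (t : ℝ) / (1 + j)))) ^ j)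
    (hc' : c < ρ₁ ^ (1 / j))
    (k : ℕ) (hk : 1 ≤ k) (z : ℝ)
    (r₁ r₂ : ℤ) (q₁ q₂ : ℕ) (hq₁ : 0 < q₁) (hq₂ : 0 < q₂)
    (hcop₁ : Int.gcd r₁ (q₁ : ℤ) = 1) (hcop₂ : Int.gcd r₂ (q₂ : ℤ) = 1)
    (hC₁ : pseudoAbs d q₁ ≤ (c / (q₁ : ℝ)) ^ i) (hC₂ : pseudoAbs d q₂ ≤ (c / (q₂ : ℝ)) ^ i)
    (hlo₁ : R ^ (k - 1) ≤ (q₁ : ℝ) ^ ((1 + j) / (t : ℝ)))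
    (hup₁ : (q₁ : ℝ) ^ ((1 + j) / (t : ℝ)) < R ^ k)
    (hlo₂ : R ^ (k - 1) ≤ (q₂ : ℝ) ^ ((1 + j) / (t : ℝ)))
    (hup₂ : (q₂ : ℝ) ^ ((1 + j) / (t : ℝ)) < R ^ k)
    (hmeet₁ : (Delta c j r₁ q₁ ∩
      Set.Icc (z - ρ₁ / R ^ (t * (k - 1))) (z + ρ₁ / R ^ (t * (k - 1)))).Nonempty)
    (hmeet₂ : (Delta c j r₂ q₂ ∩
      Set.Icc (z - ρ₁ / R ^ (t * (k - 1))) (z + ρ₁ / R ^ (t * (k - 1)))).Nonempty) :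
    (r₁ : ℝ) / (q₁ : ℝ) = (r₂ : ℝ) / (q₂ : ℝ) :=
  at_most_one_dangerous_point_general d i j hi hj hij R hR t ht ρ₁ c hρ₁ hc hρ₁' hc' k z r₁ r₂ q₁ q₂
    hq₁ hq₂ hC₁ hC₂ hlo₁ hup₁ hlo₂ hup₂ hmeet₁ hmeet₂
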